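/- arXiv:2204.03365 — 2 statements merged into one kernel-verified Lean document; each statement's English description precedes it below -/
import Mathlib

section
/- For all (n,i), (m,j) ∈ S with (n,i) < (m,j) in the lexicographic order and every f ∈ H[x], ω_{s_{n,i},δ(n,i)}(f) ≤ ω_{s_{m,j},δ(m,j)}(f) ≤ v(f(s)). Moreover the first inequality is strict for f = x − s_{m,j}: ω_{s_{n,i},δ(n,i)}(x − s_{m,j}) = δ(n,i) < δ(m,j) = v(s − s_{m,j}); in particular the family (ω_{s_{n,i},δ(n,i)})_{(n,i)∈S} is strictly increasing along S and bounded above by the map f ↦ v(f(s)). -/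
/-!
Common setup: `p` a prime, `F` an algebraic closure of `𝔽_p`, `H = F((t^ℚ))` the Hahn series
field with its canonical additive valuation `v` (minimum of the support), the Newton–Puiseux
subfield `K ⊆ H`, the elements `s_n`, the series `s = ∑ tⁿ·s_n`, the truncations `s_{n,i}`,
the rationals `δ(n,i) = n - 1/p^(i+1)`, and the depth-zero valuations `ω_{a,δ}`.
-/

open Polynomial HahnSeries

variable (p : ℕ) [Fact p.Prime]

/-- `F`, an algebraic closure of `𝔽_p`. -/
abbrev Fbar : Type := AlgebraicClosure (ZMod p)

/-- The Hahn series field `H = F((t^ℚ))`. -/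
abbrev H : Type := HahnSeries ℚ (Fbar p)

/-- The additive valuation `v(f) = min (supp f)`, with `v 0 = ∞`. -/
noncomputable def v (f : H p) : WithTop ℚ := f.orderTop

/-- The exponent `-1/p^(j+1)`. -/
def expo (j : ℕ) : ℚ := -((p : ℚ) ^ (j + 1))⁻¹

lemma one_lt_p : (1 : ℚ) < p := by
  exact_mod_cast (Fact.out : p.Prime).one_lt

lemma expo_mono : Monotone (expo p) := by
  intro j k hjk
  have hp : (1 : ℚ) < p := one_lt_p p
  have h1 : (0 : ℚ) < (p : ℚ) ^ (j + 1) := pow_pos (lt_trans one_pos hp) _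
  have h2 : (p : ℚ) ^ (j + 1) ≤ (p : ℚ) ^ (k + 1) :=
    pow_le_pow_right₀ (le_of_lt hp) (by omega)
  have := inv_anti₀ h1 h2
  simp only [expo, neg_le_neg_iff]
  linarith

lemma isPWO_univ_nat : (Set.univ : Set ℕ).IsPWO :=
  (Set.isWF_univ_iff.2 (inferInstance : WellFoundedLT ℕ)).isPWO

-- `s_n = ∑_{j ≥ n} C(j,n)·t^(-1/p^(j+1))`, where `C(j,n)` is `j.choose n` reduced mod `p`.
open Classical in
noncomputable def sn (n : ℕ) : H p where
  coeff q := if h : ∃ j : ℕ, n ≤ j ∧ q = expo p j then (Nat.choose h.choose n : Fbar p) else 0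
  isPWO_support' := by
    apply ((isPWO_univ_nat.image_of_monotone (expo_mono p)).mono)
    intro q hq
    simp only [Function.mem_support] at hq
    have h : ∃ j : ℕ, n ≤ j ∧ q = expo p j := by
      by_contra h
      rw [dif_neg h] at hq
      exact hq rfl
    obtain ⟨j, _, rfl⟩ := h
    exact ⟨j, Set.mem_univ j, rfl⟩

-- `s = ∑_{n ≥ 0} tⁿ·s_n`, i.e. the series with coefficient `C(j,n)` at `n - 1/p^(j+1)`.
open Classical in
noncomputable def sH : H p where
  coeff q := if h : ∃ nj : ℕ × ℕ, nj.1 ≤ nj.2 ∧ q = (nj.1 : ℚ) + expo p nj.2 then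
      (Nat.choose h.choose.2 h.choose.1 : Fbar p) else 0
  isPWO_support' := by
    have hmono : Monotone (fun nj : ℕ × ℕ => (nj.1 : ℚ) + expo p nj.2) := by
      intro a b hab
      exact add_le_add (by exact_mod_cast hab.1) (expo_mono p hab.2)
    apply ((isPWO_univ_nat.prod isPWO_univ_nat).image_of_monotone hmono).mono
    intro q hq
    simp only [Function.mem_support] at hq
    have h : ∃ nj : ℕ × ℕ, nj.1 ≤ nj.2 ∧ q = (nj.1 : ℚ) + expo p nj.2 := by
      by_contra h
      rw [dif_neg h] at hq
      exact hq rfl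
    obtain ⟨nj, _, rfl⟩ := h
    exact ⟨nj, by simp [Set.mem_prod], rfl⟩

/-- The additive map `ℤ →+ ℚ`, `k ↦ k/N`. -/
def embQ (N : ℕ) : ℤ →+ ℚ where
  toFun k := (k : ℚ) / (N : ℚ)
  map_zero' := by simp
  map_add' := by intros; push_cast; ring

lemma embQ_inj {N : ℕ} (hN : 0 < N) : Function.Injective (embQ N) := by
  intro a b hab
  have hN' : (0 : ℚ) < N := by exact_mod_cast hN
  simpa [embQ, div_eq_div_iff hN'.ne' hN'.ne', hN'.ne'] using hab

lemma embQ_mono {N : ℕ} (hN : 0 < N) : ∀ g g' : ℤ, embQ N g ≤ embQ N g' ↔ g ≤ g' := by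
  intro g g'
  have hN' : (0 : ℚ) < N := by exact_mod_cast hN
  simp [embQ, div_le_div_iff_of_pos_right hN', Int.cast_le]

lemma embQ_strictMono {N : ℕ} (hN : 0 < N) : StrictMono (embQ N) := by
  have := embQ_mono hN
  exact strictMono_of_le_iff_le fun a b => (this a b).symm

/-- Laurent series (Hahn series over `ℤ`) mapped into `H p` via `k ↦ k/N`. -/
noncomputable def laurentInc (N : ℕ) (hN : 0 < N) : HahnSeries ℤ (Fbar p) →+* H p :=
  HahnSeries.embDomainRingHom (embQ N) (embQ_inj hN) (embQ_mono hN)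

lemma mem_range_laurentInc_iff {N : ℕ} (hN : 0 < N) (f : H p) :
    (∃ g, laurentInc p N hN g = f) ↔ ∀ q ∈ f.support, ∃ k : ℤ, q = (k : ℚ) / N := by
  constructor
  · rintro ⟨g, rfl⟩ q hq
    obtain ⟨k, -, rfl⟩ := HahnSeries.support_embDomain_subset hq
    exact ⟨k, rfl⟩
  · intro hf
    classical
    have hpwo : (Function.support fun k : ℤ => f.coeff (embQ N k)).IsPWO := by
      apply Set.IsWF.isPWO
      rw [Set.isWF_iff_no_descending_seq]
      intro φ hφ hmem
      apply Set.isWF_iff_no_descending_seq.mp f.isWF_support (fun n => embQ N (φ n))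
        ((embQ_strictMono hN).comp_strictAnti hφ)
      intro n
      exact hmem n
    refine ⟨⟨fun k => f.coeff (embQ N k), hpwo⟩, ?_⟩
    apply HahnSeries.ext
    funext q
    by_cases hq : q ∈ Set.range (embQ N)
    · obtain ⟨k, rfl⟩ := hq
      exact HahnSeries.embDomain_mk_coeff (embQ_inj hN) (embQ_mono hN)
    · rw [show (laurentInc p N hN ⟨fun k => f.coeff (embQ N k), hpwo⟩).coeff q = 0 from
        HahnSeries.embDomain_notin_range hq]
      by_contra hne
      obtain ⟨k, hk⟩ := hf q (by simpa [HahnSeries.mem_support] using Ne.symm hne)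
      exact hq ⟨k, hk.symm⟩

/-- The Newton–Puiseux field `K`: Hahn series whose support lies in `(1/N)·ℤ` for some `N > 0`. -/
noncomputable def KNP : Subfield (H p) where
  carrier := {f : H p | ∃ N : ℕ, 0 < N ∧ ∀ q ∈ f.support, ∃ k : ℤ, q = (k : ℚ) / N}
  zero_mem' := ⟨1, one_pos, by simp⟩
  one_mem' := by
    refine ⟨1, one_pos, fun q hq => ?_⟩
    rw [HahnSeries.support_one] at hq
    exact ⟨0, by simp [Set.mem_singleton_iff.mp hq]⟩
  add_mem' := by
    rintro x y ⟨N, hN, hx⟩ ⟨M, hM, hy⟩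
    refine ⟨N * M, Nat.mul_pos hN hM, fun q hq => ?_⟩
    rcases HahnSeries.support_add_subset x y hq with h | h
    · obtain ⟨k, rfl⟩ := hx q h
      refine ⟨k * M, ?_⟩
      have hM' : (M : ℚ) ≠ 0 := by exact_mod_cast hM.ne'
      have hN' : (N : ℚ) ≠ 0 := by exact_mod_cast hN.ne'
      push_cast
      field_simp
    · obtain ⟨k, rfl⟩ := hy q h
      refine ⟨k * N, ?_⟩
      have hM' : (M : ℚ) ≠ 0 := by exact_mod_cast hM.ne'
      have hN' : (N : ℚ) ≠ 0 := by exact_mod_cast hN.ne'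
      push_cast
      field_simp
  neg_mem' := by
    rintro x ⟨N, hN, hx⟩
    exact ⟨N, hN, fun q hq => hx q (by rwa [HahnSeries.support_neg] at hq)⟩
  mul_mem' := by
    rintro x y ⟨N, hN, hx⟩ ⟨M, hM, hy⟩
    refine ⟨N * M, Nat.mul_pos hN hM, fun q hq => ?_⟩
    obtain ⟨q₁, hq₁, q₂, hq₂, rfl⟩ := HahnSeries.support_mul_subset hq
    obtain ⟨k₁, rfl⟩ := hx q₁ hq₁
    obtain ⟨k₂, rfl⟩ := hy q₂ hq₂
    refine ⟨k₁ * M + k₂ * N, ?_⟩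
    have hM' : (M : ℚ) ≠ 0 := by exact_mod_cast hM.ne'
    have hN' : (N : ℚ) ≠ 0 := by exact_mod_cast hN.ne'
    push_cast
    field_simp
  inv_mem' := by
    rintro x ⟨N, hN, hx⟩
    obtain ⟨g, rfl⟩ := (mem_range_laurentInc_iff p hN x).mpr hx
    rw [← map_inv₀]
    exact ⟨N, hN, ((mem_range_laurentInc_iff p hN _).mp ⟨g⁻¹, rfl⟩)⟩

/-- The truncation `s_{n,i} = ∑_{m<n} tᵐ·s_m + tⁿ·∑_{n ≤ j < i} C(j,n)·t^(-1/p^(j+1))`. -/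
noncomputable def strunc (n i : ℕ) : H p :=
  (∑ m ∈ Finset.range n, HahnSeries.single (m : ℚ) 1 * sn p m)
  + HahnSeries.single (n : ℚ) 1 *
      (∑ j ∈ Finset.Ico n i, HahnSeries.single (expo p j) ((Nat.choose j n : Fbar p)))

/-- `δ(n,i) = n - 1/p^(i+1)`. -/
def dlt (n i : ℕ) : ℚ := (n : ℚ) - ((p : ℚ) ^ (i + 1))⁻¹

/-- The depth-zero valuation `ω_{a,δ}(f) = min_ℓ (v(a_ℓ) + ℓ·δ)`, where
`f = ∑_ℓ a_ℓ·(x-a)^ℓ` is the Taylor expansion of `f` at `a`. -/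
noncomputable def om (a : H p) (δ : ℚ) (f : Polynomial (H p)) : WithTop ℚ :=
  (Finset.range (f.natDegree + 1)).inf
    fun ℓ => v p ((Polynomial.taylor a f).coeff ℓ) + (((ℓ : ℚ) * δ : ℚ) : WithTop ℚ)

-- The degree `[K(b) : K]` of an element `b ∈ H` over the Newton–Puiseux field `K`.
set_option synthInstance.maxHeartbeats 1000000 in
noncomputable def degK (b : H p) : ℕ :=
  Module.finrank (KNP p) (IntermediateField.adjoin (KNP p) {b})

lemma tinv_mem : HahnSeries.single (-1 : ℚ) (1 : Fbar p) ∈ KNP p := by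
  refine ⟨1, one_pos, fun q hq => ?_⟩
  have := HahnSeries.support_single_subset hq
  exact ⟨-1, by simp [Set.mem_singleton_iff.mp this]⟩

/-- `t^(-1) = single (-1) 1` as an element of `K`. -/
noncomputable def tinv : KNP p := ⟨HahnSeries.single (-1 : ℚ) (1 : Fbar p), tinv_mem p⟩

/-! The truncation `s_{n,i}` is `s` cut off below `δ(n,i)`, and the coefficient of `s` at
`δ(n,i)` is `C(i,n) ≠ 0`; hence `v(s - s_{n,i}) = δ(n,i)`, and the `δ(n,i)` increase
lexicographically. Re-expanding the Taylor series at a new centre shows that `ω_{a,δ}` only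
depends on the disc `v(x - a) ≥ δ`; it also increases with `δ`. Moving the centre from
`s_{n,i}` to `s_{m,j}` (at distance `δ(n,i)`) and then raising `δ` gives the monotonicity,
and moving it to `s` gives the bound by `ω_{s,δ}(f) ≤ v(f(s))`. -/

theorem HahnSeries.orderTop_sub_truncLT {Γ R : Type*} [LinearOrder Γ] [Ring R] {x : HahnSeries Γ R}
    {c : Γ} (hc : x.coeff c ≠ 0) : (x - truncLT c x).orderTop = c := by
  have hcoeff : ∀ q, (x - truncLT c x).coeff q = if q < c then 0 else x.coeff q := by
    intro q
    rw [coeff_sub, HahnSeries.coeff_truncLT]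
    split_ifs <;> simp
  refine orderTop_eq_of_le (by simpa [hcoeff] using hc) fun q hq => ?_
  rw [mem_support, hcoeff] at hq
  exact not_lt.mp fun hqc => hq (if_pos hqc)

lemma v_eq_addVal (x : H p) : v p x = HahnSeries.addVal ℚ (Fbar p) x :=
  HahnSeries.addVal_apply.symm

lemma v_natCast_nonneg (N : ℕ) : 0 ≤ v p (N : H p) := by
  rw [v, ← map_natCast HahnSeries.C, HahnSeries.C_apply]
  exact_mod_cast HahnSeries.orderTop_single_le

lemma coe_mul_le_v_pow {x : H p} {δ : ℚ} (h : (δ : WithTop ℚ) ≤ v p x) (k : ℕ) :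
    ((k * δ : ℚ) : WithTop ℚ) ≤ v p (x ^ k) := by
  rw [v_eq_addVal, AddValuation.map_pow, ← nsmul_eq_mul, WithTop.coe_nsmul, ← v_eq_addVal]
  exact nsmul_le_nsmul_right h k

lemma le_v_sum_add {ι : Type*} (s : Finset ι) (u : ι → H p) {c d : WithTop ℚ}
    (h : ∀ k ∈ s, c ≤ v p (u k) + d) : c ≤ v p (∑ k ∈ s, u k) + d := by
  classical
  induction s using Finset.induction_on with
  | empty => simp [v_eq_addVal]
  | insert a s ha ih =>
    rw [Finset.sum_insert ha]
    calc c ≤ min (v p (u a) + d) (v p (∑ k ∈ s, u k) + d) :=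
          le_min (h a (s.mem_insert_self a)) (ih fun k hk => h k (Finset.mem_insert_of_mem hk))
      _ = min (v p (u a)) (v p (∑ k ∈ s, u k)) + d := min_add_add_right _ _ _
      _ ≤ v p (u a + ∑ k ∈ s, u k) + d := by
          gcongr
          simpa only [v_eq_addVal] using AddValuation.map_add _ _ _

lemma om_le (a : H p) (δ : ℚ) (f : (H p)[X]) (ℓ : ℕ) :
    om p a δ f ≤ v p ((taylor a f).coeff ℓ) + ((ℓ * δ : ℚ) : WithTop ℚ) := by
  by_cases hℓ : ℓ ≤ f.natDegree
  · exact Finset.inf_le (Finset.mem_range.mpr (by omega))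
  · rw [coeff_eq_zero_of_natDegree_lt (by rw [natDegree_taylor]; omega)]
    simp [v_eq_addVal]

lemma le_om_iff {a : H p} {δ : ℚ} {f : (H p)[X]} {c : WithTop ℚ} :
    c ≤ om p a δ f ↔ ∀ ℓ : ℕ, c ≤ v p ((taylor a f).coeff ℓ) + ((ℓ * δ : ℚ) : WithTop ℚ) :=
  ⟨fun h ℓ => h.trans (om_le p a δ f ℓ), fun h => Finset.le_inf fun ℓ _ => h ℓ⟩

lemma om_mono (a : H p) {δ δ' : ℚ} (h : δ ≤ δ') (f : (H p)[X]) : om p a δ f ≤ om p a δ' f :=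
  (le_om_iff p).mpr fun ℓ => (om_le p a δ f ℓ).trans <| by
    gcongr
    exact_mod_cast mul_le_mul_of_nonneg_left h ℓ.cast_nonneg

lemma om_le_om_of_le_v_sub {a b : H p} {δ : ℚ} (h : (δ : WithTop ℚ) ≤ v p (a - b))
    (f : (H p)[X]) : om p b δ f ≤ om p a δ f := by
  refine (le_om_iff p).mpr fun ℓ => ?_
  set g := taylor b f
  have hcoeff : (taylor a f).coeff ℓ = ∑ k ∈ Finset.range (g.natDegree + 1),
      ((k + ℓ).choose ℓ : H p) * g.coeff (k + ℓ) * (a - b) ^ k := by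
    have hg : taylor a f = taylor (a - b) g := by rw [taylor_taylor, sub_add_cancel]
    rw [hg, taylor_coeff, eval_eq_sum_range' (n := g.natDegree + 1)
      ((natDegree_hasseDeriv_le g ℓ).trans_lt (by omega))]
    simp only [hasseDeriv_coeff]
  rw [hcoeff]
  refine le_v_sum_add p _ _ fun k _ => ?_
  calc om p b δ f ≤ v p (g.coeff (k + ℓ)) + (((k + ℓ : ℕ) * δ : ℚ) : WithTop ℚ) := om_le p b δ f _
    _ = (0 + v p (g.coeff (k + ℓ)) + ((k * δ : ℚ) : WithTop ℚ)) + ((ℓ * δ : ℚ) : WithTop ℚ) := by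
        rw [zero_add, add_assoc, ← WithTop.coe_add]
        congr 2
        push_cast
        ring
    _ ≤ (v p ((k + ℓ).choose ℓ : H p) + v p (g.coeff (k + ℓ)) + v p ((a - b) ^ k))
          + ((ℓ * δ : ℚ) : WithTop ℚ) := by
        gcongr
        · exact v_natCast_nonneg p _
        · exact coe_mul_le_v_pow p h k
    _ = v p (((k + ℓ).choose ℓ : H p) * g.coeff (k + ℓ) * (a - b) ^ k)
          + ((ℓ * δ : ℚ) : WithTop ℚ) := by
        simp only [v_eq_addVal, AddValuation.map_mul]

lemma om_eq_om_of_le_v_sub {a b : H p} {δ : ℚ} (h : (δ : WithTop ℚ) ≤ v p (a - b))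
    (f : (H p)[X]) : om p a δ f = om p b δ f := by
  refine le_antisymm (om_le_om_of_le_v_sub p ?_ f) (om_le_om_of_le_v_sub p h f)
  rwa [v_eq_addVal, AddValuation.map_sub_swap, ← v_eq_addVal]

lemma om_le_v_eval {s b : H p} {δ : ℚ} (h : (δ : WithTop ℚ) ≤ v p (s - b)) (f : (H p)[X]) :
    om p b δ f ≤ v p (f.eval s) := by
  rw [← om_eq_om_of_le_v_sub p h, ← taylor_coeff_zero]
  simpa using om_le p s δ f 0

lemma om_X_sub_C (a b : H p) (δ : ℚ) : om p a δ (X - Polynomial.C b) = min (v p (a - b)) δ := by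
  have ht : taylor a (X - Polynomial.C b) = X + Polynomial.C (a - b) := by
    rw [taylor_apply, sub_comp, X_comp, C_comp, C_sub]
    ring
  rw [om, natDegree_X_sub_C, ht, show Finset.range (1 + 1) = {0, 1} from rfl,
    Finset.inf_insert, Finset.inf_singleton]
  simp [v_eq_addVal]

lemma expo_strictMono : StrictMono (expo p) := by
  intro j k hjk
  have hpow : (p : ℚ) ^ (j + 1) < (p : ℚ) ^ (k + 1) := pow_lt_pow_right₀ (one_lt_p p) (by omega)
  have hpos : (0 : ℚ) < (p : ℚ) ^ (j + 1) := pow_pos (zero_lt_one.trans (one_lt_p p)) _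
  simpa only [expo, neg_lt_neg_iff] using inv_strictAnti₀ hpos hpow

lemma expo_neg (j : ℕ) : expo p j < 0 := by
  have : (0 : ℚ) < p := zero_lt_one.trans (one_lt_p p)
  simp only [expo, neg_lt_zero]
  positivity

lemma neg_one_lt_expo (j : ℕ) : -1 < expo p j := by
  have : ((p : ℚ) ^ (j + 1))⁻¹ < 1 := inv_lt_one_of_one_lt₀ (one_lt_pow₀ (one_lt_p p) (by omega))
  simp only [expo]
  linarith

lemma natCast_add_expo_lt_of_lt {n m : ℕ} (j k : ℕ) (h : n < m) :
    (n : ℚ) + expo p j < m + expo p k := by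
  have : (n : ℚ) + 1 ≤ m := by exact_mod_cast h
  linarith [neg_one_lt_expo p k, expo_neg p j]

lemma natCast_add_expo_lt_iff {n j m k : ℕ} :
    (n : ℚ) + expo p j < m + expo p k ↔ n < m ∨ n = m ∧ j < k := by
  constructor
  · intro h
    rcases lt_trichotomy n m with hnm | rfl | hmn
    · exact .inl hnm
    · exact .inr ⟨rfl, (expo_strictMono p).lt_iff_lt.mp (by linarith)⟩
    · exact absurd h (natCast_add_expo_lt_of_lt p k j hmn).asymm
  · rintro (hnm | ⟨rfl, hjk⟩)
    · exact natCast_add_expo_lt_of_lt p j k hnm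
    · linarith [expo_strictMono p hjk]

lemma natCast_add_expo_inj {n j m k : ℕ} :
    (n : ℚ) + expo p j = m + expo p k ↔ n = m ∧ j = k := by
  refine ⟨fun h => ?_, by rintro ⟨rfl, rfl⟩; rfl⟩
  have hlt := h.not_lt
  have hgt := h.not_gt
  rw [natCast_add_expo_lt_iff] at hlt hgt
  omega

lemma dlt_eq (p n i : ℕ) : dlt p n i = n + expo p i := by
  rw [dlt, expo, sub_eq_add_neg]

lemma dlt_lt_dlt {n i m j : ℕ} (hlex : n < m ∨ n = m ∧ i < j) : dlt p n i < dlt p m j := by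
  rw [dlt_eq, dlt_eq]
  exact (natCast_add_expo_lt_iff p).mpr hlex

lemma sn_coeff_expo {n j : ℕ} (h : n ≤ j) : (sn p n).coeff (expo p j) = j.choose n := by
  have hex : ∃ j' : ℕ, n ≤ j' ∧ expo p j = expo p j' := ⟨j, h, rfl⟩
  simp only [sn, dif_pos hex]
  rw [(expo_strictMono p).injective hex.choose_spec.2.symm]

lemma sn_coeff_eq_zero {n : ℕ} {q : ℚ} (h : ¬ ∃ j : ℕ, n ≤ j ∧ q = expo p j) :
    (sn p n).coeff q = 0 := by
  simp only [sn, dif_neg h]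

lemma sH_coeff_natCast_add_expo {n j : ℕ} (h : n ≤ j) :
    (sH p).coeff (n + expo p j) = j.choose n := by
  have hex : ∃ x : ℕ × ℕ, x.1 ≤ x.2 ∧ (n : ℚ) + expo p j = x.1 + expo p x.2 := ⟨(n, j), h, rfl⟩
  simp only [sH, dif_pos hex]
  obtain ⟨hn, hj⟩ := (natCast_add_expo_inj p).mp hex.choose_spec.2.symm
  rw [hn, hj]

lemma sH_coeff_eq_zero {q : ℚ} (h : ¬ ∃ x : ℕ × ℕ, x.1 ≤ x.2 ∧ q = x.1 + expo p x.2) :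
    (sH p).coeff q = 0 := by
  simp only [sH, dif_neg h]

lemma strunc_coeff (n i : ℕ) (q : ℚ) :
    (strunc p n i).coeff q = ∑ m ∈ Finset.range n, (sn p m).coeff (q - m) +
      ∑ j ∈ Finset.Ico n i, (single ((n : ℚ) + expo p j) (j.choose n : Fbar p)).coeff q := by
  simp only [strunc, HahnSeries.coeff_add, HahnSeries.coeff_sum, coeff_single_mul, one_mul,
    Finset.mul_sum, single_mul_single]

lemma sn_coeff_natCast_add_expo_sub {n j : ℕ} (m : ℕ) (h : n ≤ j) :
    (sn p m).coeff (n + expo p j - m) = if m = n then (j.choose n : Fbar p) else 0 := by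
  split_ifs with hmn
  · rw [hmn, add_sub_cancel_left, sn_coeff_expo p h]
  · refine sn_coeff_eq_zero p fun ⟨k, _, hk⟩ => hmn ?_
    have : (n : ℚ) + expo p j = m + expo p k := by linarith
    exact ((natCast_add_expo_inj p).mp this).1.symm

lemma sn_coeff_sub_eq_zero {q : ℚ} (hq : ¬ ∃ x : ℕ × ℕ, x.1 ≤ x.2 ∧ q = x.1 + expo p x.2)
    (m : ℕ) : (sn p m).coeff (q - m) = 0 :=
  sn_coeff_eq_zero p fun ⟨k, hmk, hk⟩ => hq ⟨(m, k), hmk, by simp only; linarith⟩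

lemma strunc_eq_truncLT (n i : ℕ) : strunc p n i = HahnSeries.truncLT (dlt p n i) (sH p) := by
  ext q
  rw [HahnSeries.coeff_truncLT, strunc_coeff, dlt_eq]
  by_cases hq : ∃ x : ℕ × ℕ, x.1 ≤ x.2 ∧ q = x.1 + expo p x.2
  · obtain ⟨⟨n', j'⟩, hle, rfl⟩ := hq
    simp only [sn_coeff_natCast_add_expo_sub p _ hle, HahnSeries.coeff_single,
      natCast_add_expo_inj, natCast_add_expo_lt_iff, sH_coeff_natCast_add_expo p hle,
      Finset.sum_ite_eq', Finset.mem_range]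
    rcases eq_or_ne n' n with rfl | hn
    · simp only [true_and, lt_irrefl, if_false, zero_add, false_or, Finset.sum_ite_eq,
        Finset.mem_Ico, hle]
    · simp only [hn, false_and, if_false, Finset.sum_const_zero, add_zero, or_false]
  · rw [sH_coeff_eq_zero p hq, ite_self, Finset.sum_eq_zero fun m _ => sn_coeff_sub_eq_zero p hq m,
      Finset.sum_eq_zero fun j hj => HahnSeries.coeff_single_of_ne ?_, add_zero]
    rintro rfl
    exact hq ⟨(n, j), (Finset.mem_Ico.mp hj).1, rfl⟩

lemma v_sH_sub_strunc {n i : ℕ} (h : n ≤ i) (hp : ¬ p ∣ i.choose n) :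
    v p (sH p - strunc p n i) = dlt p n i := by
  rw [v, strunc_eq_truncLT, HahnSeries.orderTop_sub_truncLT]
  rwa [dlt_eq, sH_coeff_natCast_add_expo p h, Ne, CharP.cast_eq_zero_iff (Fbar p) p]

/-- for `(n,i) < (m,j)` in `S` and every `f ∈ H[x]`,
`ω_{s_{n,i},δ(n,i)}(f) ≤ ω_{s_{m,j},δ(m,j)}(f) ≤ v(f(s))`; moreover the first inequality
is strict for `f = x - s_{m,j}`: `ω_{s_{n,i},δ(n,i)}(x - s_{m,j}) = δ(n,i) < δ(m,j)
= v(s - s_{m,j})`; in particular the family is strictly increasing along `S` and bounded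
above by `f ↦ v(f(s))`. -/
theorem omega_family_increasing (n i m j : ℕ) (h1 : n ≤ i) (h2 : ¬ p ∣ Nat.choose i n)
    (h3 : m ≤ j) (h4 : ¬ p ∣ Nat.choose j m) (hlex : n < m ∨ (n = m ∧ i < j)) :
    (∀ f : Polynomial (H p),
      om p (strunc p n i) (dlt p n i) f ≤ om p (strunc p m j) (dlt p m j) f ∧
      om p (strunc p m j) (dlt p m j) f ≤ v p (Polynomial.eval (sH p) f))
    ∧ om p (strunc p n i) (dlt p n i) (X - Polynomial.C (strunc p m j)) = ((dlt p n i : ℚ) : WithTop ℚ)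
    ∧ dlt p n i < dlt p m j
    ∧ ((dlt p m j : ℚ) : WithTop ℚ) = v p (sH p - strunc p m j) := by
  have hδ : dlt p n i < dlt p m j := dlt_lt_dlt p hlex
  have hv_ni := v_sH_sub_strunc p h1 h2
  have hv_mj := v_sH_sub_strunc p h3 h4
  have hv_sub : v p (strunc p n i - strunc p m j) = dlt p n i := by
    have hlt : v p (sH p - strunc p n i) < v p (sH p - strunc p m j) := by
      rw [hv_ni, hv_mj]
      exact_mod_cast hδ
    rw [← sub_sub_sub_cancel_left _ _ (sH p), v_eq_addVal,
      AddValuation.map_sub_eq_of_lt_right _ (by simpa only [v_eq_addVal] using hlt), ← v_eq_addVal, hv_ni]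
  refine ⟨fun f => ⟨?_, om_le_v_eval p hv_mj.ge f⟩, by rw [om_X_sub_C, hv_sub, min_self], hδ,
    hv_mj.symm⟩
  calc om p (strunc p n i) (dlt p n i) f = om p (strunc p m j) (dlt p n i) f :=
        om_eq_om_of_le_v_sub p hv_sub.ge f
    _ ≤ om p (strunc p m j) (dlt p m j) f := om_mono p _ hδ.le f
end

section
/- Let L ⊆ H be the relative algebraic closure of K in H, i.e., the subfield of all elements of H that are algebraic over K. For every a ∈ L, every δ ∈ Q, and every nonzero g ∈ K[x]: there exists h ∈ K[x] with ω_{a,δ}(g·h − 1) > 0 if and only if there exists h' ∈ L[x] with ω_{a,δ}(g·h' − 1) > 0. (Equivalently, the initial term of g is a unit in the graded algebra of the restriction of ω_{a,δ} to K[x] if and only if it is a unit in the graded algebra of the restriction of ω_{a,δ} to L[x].) -/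
/-!
Common setup: `p` a prime, `F` an algebraic closure of `𝔽_p`, `H = F((t^ℚ))` the Hahn series
field with its canonical additive valuation `v` (minimum of the support), the Newton–Puiseux
subfield `K ⊆ H`, the elements `s_n`, the series `s = ∑ tⁿ·s_n`, the truncations `s_{n,i}`,
the rationals `δ(n,i) = n - 1/p^(i+1)`, and the depth-zero valuations `ω_{a,δ}`.
-/

open Polynomial HahnSeries

variable (p : ℕ) [Fact p.Prime]

/-!
In the Taylor coordinate `X = x - a`, `ω_{a,δ}` is the Gauss valuation of weight `δ` on `H[X]`,
and initial forms are multiplicative for it: if `d` and `e` are the largest indices at which the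
minima for `A` and `B` are attained, the coefficient of `A * B` in degree `d + e` has a unique
term of least value. So if the initial form of `g * h'` is `1`, then `d = e = 0`: the initial form
of `g` is that of its constant Taylor coefficient `g(a)`, and the monomial
`c = t^(-v(g(a))) / lc(g(a))`, which lies in `K`, already satisfies `ω_{a,δ}(g * c - 1) > 0`.
-/

theorem exists_greatest_argmin {α : Type*} [LinearOrder α] [OrderTop α] {f : ℕ → α} {N : ℕ}
    (hN : ∀ i, N < i → f i = ⊤) {i₀ : ℕ} (hi₀ : f i₀ ≠ ⊤) :
    ∃ d, (∀ i, f d ≤ f i) ∧ ∀ i, d < i → f d < f i := by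
  classical
  obtain ⟨m, hmN, hm⟩ := (Finset.range (N + 1)).exists_min_image f ⟨0, by simp⟩
  have hmin : ∀ j, f m ≤ f j := fun j => (le_or_gt j N).elim
    (fun hj => hm j (Finset.mem_range.2 (by omega))) (fun hj => (hN j hj).symm ▸ le_top)
  have hdmin := Nat.findGreatest_spec (P := fun i => ∀ j, f i ≤ f j)
    (Nat.lt_succ_iff.1 (Finset.mem_range.1 hmN)) hmin
  refine ⟨_, hdmin, fun i hi => ?_⟩
  rcases le_or_gt i N with hiN | hiN
  · obtain ⟨j, hj⟩ := not_forall.1 (Nat.findGreatest_is_greatest hi hiN)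
    exact (hdmin j).trans_lt (not_le.1 hj)
  · rw [hN i hiN]
    exact (hdmin i₀).trans_lt (lt_top_iff_ne_top.2 hi₀)

section GaussValuation

variable {R Γ : Type*} [CommRing R] [AddCommGroup Γ] [LinearOrder Γ] [IsOrderedAddMonoid Γ]
  (v : AddValuation R (WithTop Γ)) (δ : Γ)

def termVal (A : R[X]) (ℓ : ℕ) : WithTop Γ := v (A.coeff ℓ) + ((ℓ • δ : Γ) : WithTop Γ)

/-- `InitialEqOne v δ P` says that the initial form of `P` for the Gauss valuation
`min_ℓ (v P_ℓ + ℓ • δ)` is `1`, i.e. that this valuation is positive on `P - 1`. -/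
def InitialEqOne (P : R[X]) : Prop := ∀ ℓ, 0 < termVal v δ (P - 1) ℓ

/-- The initial form of `A` is its constant term. -/
def InitialIsConst (A : R[X]) : Prop := ∀ ℓ, 0 < ℓ → termVal v δ A 0 < termVal v δ A ℓ

variable {v δ}

theorem termVal_zero (A : R[X]) : termVal v δ A 0 = v (A.coeff 0) := by
  simp [termVal]

theorem termVal_eq_top_of_natDegree_lt {A : R[X]} {ℓ : ℕ} (h : A.natDegree < ℓ) :
    termVal v δ A ℓ = ⊤ := by
  simp [termVal, coeff_eq_zero_of_natDegree_lt h]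

theorem termVal_add_termVal (A B : R[X]) (i j : ℕ) :
    termVal v δ A i + termVal v δ B j =
      v (A.coeff i * B.coeff j) + (((i + j) • δ : Γ) : WithTop Γ) := by
  rw [termVal, termVal, add_add_add_comm, v.map_mul, add_nsmul, WithTop.coe_add]

theorem termVal_mul_of_greatest_argmin {A B : R[X]} {d e : ℕ}
    (hd : ∀ i, termVal v δ A d ≤ termVal v δ A i)
    (hd' : ∀ i, d < i → termVal v δ A d < termVal v δ A i)
    (he : ∀ j, termVal v δ B e ≤ termVal v δ B j)
    (he' : ∀ j, e < j → termVal v δ B e < termVal v δ B j) :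
    termVal v δ (A * B) (d + e) = termVal v δ A d + termVal v δ B e := by
  have hAd : termVal v δ A d ≠ ⊤ := (hd' _ d.lt_succ_self).ne_top
  have hBe : termVal v δ B e ≠ ⊤ := (he' _ e.lt_succ_self).ne_top
  have hde : v (A.coeff d * B.coeff e) ≠ ⊤ := by
    have := WithTop.add_ne_top.2 ⟨hAd, hBe⟩
    rw [termVal_add_termVal] at this
    exact (WithTop.add_ne_top.1 this).1
  have hmem : (d, e) ∈ Finset.HasAntidiagonal.antidiagonal (d + e) :=
    Finset.HasAntidiagonal.mem_antidiagonal.2 rfl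
  rw [termVal_add_termVal, termVal, Polynomial.coeff_mul, ← Finset.add_sum_erase _ _ hmem,
    v.map_add_eq_of_lt_left]
  refine v.map_lt_sum hde fun ij hij => ?_
  obtain ⟨hne, hij⟩ := Finset.mem_erase.1 hij
  have hsum : ij.1 + ij.2 = d + e := Finset.HasAntidiagonal.mem_antidiagonal.1 hij
  have hlt : termVal v δ A d + termVal v δ B e < termVal v δ A ij.1 + termVal v δ B ij.2 := by
    rcases lt_or_ge d ij.1 with h | h
    · exact WithTop.add_lt_add_of_lt_of_le hBe (hd' _ h) (he _)
    · have : e < ij.2 := by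
        by_contra!
        exact hne (Prod.ext (by omega) (by omega))
      exact WithTop.add_lt_add_of_le_of_lt hAd (hd _) (he' _ this)
  rwa [termVal_add_termVal, termVal_add_termVal, hsum,
    WithTop.add_lt_add_iff_right WithTop.coe_ne_top] at hlt

theorem InitialIsConst.coeff_zero_ne_zero {A : R[X]} (hA : InitialIsConst v δ A) :
    A.coeff 0 ≠ 0 := by
  intro h0
  have := hA 1 one_pos
  rw [termVal_zero, h0, v.map_zero] at this
  exact not_top_lt this

theorem InitialEqOne.initialIsConst_left {A B : R[X]} (h : InitialEqOne v δ (A * B)) :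
    InitialIsConst v δ A := by
  have hAB : ∀ ℓ, 0 < ℓ → 0 < termVal v δ (A * B) ℓ := fun ℓ hℓ => by
    simpa [termVal, Polynomial.coeff_one, hℓ.ne'] using h ℓ
  have h00 : termVal v δ A 0 + termVal v δ B 0 = 0 := by
    have h0 := h 0
    rw [termVal_zero, Polynomial.coeff_sub, Polynomial.coeff_one_zero, mul_coeff_zero] at h0
    rw [termVal_add_termVal, zero_add, zero_nsmul, WithTop.coe_zero, add_zero,
      v.map_eq_of_lt_sub (by rwa [v.map_one]), v.map_one]
  obtain ⟨d, hd, hd'⟩ := exists_greatest_argmin (fun _ => termVal_eq_top_of_natDegree_lt)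
    (WithTop.add_ne_top.1 (h00 ▸ WithTop.zero_ne_top)).1
  obtain ⟨e, he, he'⟩ := exists_greatest_argmin (fun _ => termVal_eq_top_of_natDegree_lt)
    (WithTop.add_ne_top.1 (h00 ▸ WithTop.zero_ne_top)).2
  have hde : d + e = 0 := by
    by_contra hne
    have hpos := hAB (d + e) (Nat.pos_of_ne_zero hne)
    rw [termVal_mul_of_greatest_argmin hd hd' he he'] at hpos
    exact ((add_le_add (hd 0) (he 0)).trans h00.le).not_gt hpos
  obtain rfl : d = 0 := by omega
  exact hd'

theorem InitialIsConst.initialEqOne_mul_C {A : R[X]} (hA : InitialIsConst v δ A) {c : R}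
    (hc : 0 < v (A.coeff 0 * c - 1)) : InitialEqOne v δ (A * C c) := by
  intro ℓ
  rcases ℓ.eq_zero_or_pos with rfl | hℓ
  · simpa [termVal] using hc
  have hc0 : termVal v δ A 0 + v c = 0 := by
    rw [termVal_zero, ← v.map_mul, v.map_eq_of_lt_sub (by rwa [v.map_one]), v.map_one]
  have hc_ne_top : v c ≠ ⊤ := (WithTop.add_ne_top.1 (hc0 ▸ WithTop.zero_ne_top)).2
  have hcoeff : termVal v δ (A * C c - 1) ℓ = termVal v δ A ℓ + v c := by
    rw [termVal, termVal, Polynomial.coeff_sub, Polynomial.coeff_one, if_neg hℓ.ne', sub_zero,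
      coeff_mul_C, v.map_mul, add_right_comm]
  rw [hcoeff, ← hc0]
  exact WithTop.add_lt_add_right hc_ne_top (hA ℓ hℓ)

end GaussValuation

theorem HahnSeries.orderTop_mul_single_sub_one_pos {Γ R : Type*} [AddCommGroup Γ] [LinearOrder Γ]
    [IsOrderedAddMonoid Γ] [Field R] {x : HahnSeries Γ R} (hx : x ≠ 0) :
    0 < (x * single (-x.order) x.leadingCoeff⁻¹ - 1).orderTop := by
  rw [← orderTop_neg, neg_sub, mul_comm]
  exact unit_aux x (inv_mul_cancel₀ (leadingCoeff_ne_zero.2 hx)) _ (neg_add_cancel _)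

variable {p}

theorem single_mem_KNP (q : ℚ) (r : Fbar p) : single q r ∈ KNP p :=
  ⟨q.den, q.den_pos, fun _ hq => ⟨q.num, by rw [support_single_subset hq, Rat.num_div_den]⟩⟩

theorem termVal_addVal (δ : ℚ) (A : (H p)[X]) (ℓ : ℕ) :
    termVal (addVal ℚ (Fbar p)) δ A ℓ = v p (A.coeff ℓ) + (((ℓ : ℚ) * δ : ℚ) : WithTop ℚ) := by
  rw [termVal, addVal_apply, nsmul_eq_mul]
  rfl

theorem om_pos_iff {a : H p} {δ : ℚ} {f : (H p)[X]} :
    0 < om p a δ f ↔ ∀ ℓ, 0 < termVal (addVal ℚ (Fbar p)) δ (taylor a f) ℓ := by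
  rw [om, Finset.lt_inf_iff (WithTop.coe_lt_top 0)]
  simp only [Finset.mem_range, ← termVal_addVal]
  refine ⟨fun h ℓ => ?_, fun h ℓ _ => h ℓ⟩
  rcases lt_or_ge ℓ (f.natDegree + 1) with hℓ | hℓ
  · exact h ℓ hℓ
  · rw [termVal_eq_top_of_natDegree_lt (by rw [natDegree_taylor]; omega)]
    exact WithTop.coe_lt_top 0

theorem om_mul_sub_one_pos_iff {a : H p} {δ : ℚ} {G Q : (H p)[X]} :
    0 < om p a δ (G * Q - 1) ↔ InitialEqOne (addVal ℚ (Fbar p)) δ (taylor a G * taylor a Q) := by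
  rw [om_pos_iff, map_sub, taylor_mul, taylor_one, map_one]
  rfl

theorem exists_mem_KNP_om_mul_C_sub_one_pos {a : H p} {δ : ℚ} {G Q : (H p)[X]}
    (h : 0 < om p a δ (G * Q - 1)) : ∃ c ∈ KNP p, 0 < om p a δ (G * C c - 1) := by
  rw [om_mul_sub_one_pos_iff] at h
  have hG := h.initialIsConst_left
  set x := (taylor a G).coeff 0
  refine ⟨single (-x.order) x.leadingCoeff⁻¹, single_mem_KNP _ _, ?_⟩
  rw [om_mul_sub_one_pos_iff, taylor_C]
  exact hG.initialEqOne_mul_C (by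
    rw [addVal_apply]; exact orderTop_mul_single_sub_one_pos hG.coeff_zero_ne_zero)

theorem unit_in_K_iff_unit_in_L_general (a : H p) (dl : ℚ)
    (g : Polynomial (KNP p)) :
    (∃ h : Polynomial (KNP p),
        0 < om p a dl (g.map (algebraMap (KNP p) (H p)) * h.map (algebraMap (KNP p) (H p)) - 1))
    ↔ (∃ h' : Polynomial (algebraicClosure (KNP p) (H p)),
        0 < om p a dl (g.map (algebraMap (KNP p) (H p))
            * h'.map (algebraMap (algebraicClosure (KNP p) (H p)) (H p)) - 1)) := by
  constructor
  · rintro ⟨h, hh⟩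
    refine ⟨h.map (algebraMap (KNP p) (algebraicClosure (KNP p) (H p))), ?_⟩
    rwa [Polynomial.map_map, ← IsScalarTower.algebraMap_eq]
  · rintro ⟨h', hh'⟩
    obtain ⟨c, hc, hc'⟩ := exists_mem_KNP_om_mul_C_sub_one_pos hh'
    exact ⟨C ⟨c, hc⟩, by rwa [Polynomial.map_C]⟩

set_option synthInstance.maxHeartbeats 1000000 in
/-- with `L ⊆ H` the relative algebraic closure of `K` in `H`, for `a ∈ L`,
`δ ∈ ℚ` and a nonzero `g ∈ K[x]`: the initial term of `g` is a unit over `K[x]` iff it is a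
unit over `L[x]`; concretely, `∃ h ∈ K[x], ω_{a,δ}(g·h - 1) > 0` iff
`∃ h' ∈ L[x], ω_{a,δ}(g·h' - 1) > 0`. -/
theorem unit_in_K_iff_unit_in_L (a : H p) (ha : a ∈ algebraicClosure (KNP p) (H p)) (dl : ℚ)
    (g : Polynomial (KNP p)) (hg : g ≠ 0) :
    (∃ h : Polynomial (KNP p),
        0 < om p a dl (g.map (algebraMap (KNP p) (H p)) * h.map (algebraMap (KNP p) (H p)) - 1))
    ↔ (∃ h' : Polynomial (algebraicClosure (KNP p) (H p)),
        0 < om p a dl (g.map (algebraMap (KNP p) (H p))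
            * h'.map (algebraMap (algebraicClosure (KNP p) (H p)) (H p)) - 1)) :=
  unit_in_K_iff_unit_in_L_general a dl g
end
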